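/- Let d ≥ 2, m, n_1,…,n_d be positive integers, r = (r_1,…,r_d) a tuple of positive integers, and a ∈ (0,1). Let A : ℝ^{n_1×⋯×n_d} → ℝ^m be a linear map satisfying the HOSVD-TRIP at rank 3r = (3r_1,…,3r_d) with constant δ ≤ a/(a+8), and set ε = a²(1−δ)²/(17·(1−δ+√(1+δ)·‖A‖_{2→2})²) and b = 2√(1+δ)/(1−δ) + √(4ε+2ε²)·‖A‖_{2→2}/(1−δ). Let X and X' be tensors of HOSVD-rank at most r, let e ∈ ℝ^m, let μ satisfy 1/(1+δ) ≤ μ ≤ 1/(1−δ), and set Y = X' + μ·A*(A(X) + e − A(X')). If X'' is a tensor of HOSVD-rank at most r satisfying ‖Y − X''‖_F ≤ (1+ε)·‖Y − X‖_F, then ‖X'' − X‖_F ≤ a·‖X' − X‖_F + b·‖e‖_2. -/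

import Mathlib

/-!
Write `u = X'' - X` and `v = X' - X`, and let `V` be the span of `X, X', X''`; every tensor in `V`
has HOSVD-rank at most `3r`, so `A` is a near-isometry on `V`. The gradient step satisfies
`Y - X = v + μ A*(e - A v)`, and expanding `‖(Y - X) - u‖² ≤ (1 + ε)² ‖Y - X‖²` gives
`‖u‖² ≤ 2 ⟪Y - X, u⟫ + (2ε + ε²) ‖Y - X‖²`. By polarization, the restricted isometry bounds
`⟪v, u⟫ - μ ⟪A v, A u⟫` by `2δ/(1-δ) ‖v‖ ‖u‖`, while `‖Y - X‖` is controlled linearly by `‖v‖`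
and `‖e‖`. Solving the resulting quadratic inequality for `‖u‖` yields the bound, and the choice
of `δ` and `ε` makes the contraction factor at most `a`.
-/

open scoped BigOperators

noncomputable section

/-- The mode-`k` unfolding of an order-`d` tensor, with columns indexed (redundantly)
by full multi-indices: entry `(a, j)` is `X` evaluated at `j` with its `k`-th index
replaced by `a`.  Its rank coincides with the rank of the usual mode-`k` unfolding. -/
def unfold {d : ℕ} (n : Fin d → ℕ) (k : Fin d) (X : (∀ i, Fin (n i)) → ℝ) :
    Matrix (Fin (n k)) (∀ i, Fin (n i)) ℝ :=
  Matrix.of fun a j => X (Function.update j k a)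

/-- `X` has HOSVD-rank at most `r`: every mode-`k` unfolding has matrix rank at most `r k`. -/
def hosvdRankLE {d : ℕ} (n r : Fin d → ℕ) (X : EuclideanSpace ℝ (∀ i, Fin (n i))) : Prop :=
  ∀ k, (unfold n k (fun j => X j)).rank ≤ r k

open scoped RealInnerProductSpace InnerProduct

namespace Matrix

variable {K m n : Type*} [Field K] [Fintype n]

theorem rank_add_le (A B : Matrix m n K) : (A + B).rank ≤ A.rank + B.rank := by
  rw [rank, rank, rank, mulVecLin_add]
  refine (Submodule.finrank_mono ?_).trans (Submodule.finrank_add_le_finrank_add_finrank _ _)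
  rintro _ ⟨x, rfl⟩
  exact Submodule.add_mem_sup ⟨x, rfl⟩ ⟨x, rfl⟩

theorem rank_smul_le (c : K) (A : Matrix m n K) : (c • A).rank ≤ A.rank := by
  have : (c • A).mulVecLin = c • A.mulVecLin := LinearMap.ext fun v => smul_mulVec c A v
  rw [rank, rank, this]
  exact Submodule.finrank_mono (LinearMap.range_smul_le_range _ c)

end Matrix

section HosvdRank

variable {d : ℕ} {n r s : Fin d → ℕ} {X Y : EuclideanSpace ℝ (∀ i, Fin (n i))}

theorem hosvdRankLE.mono (hX : hosvdRankLE n r X) (hrs : r ≤ s) : hosvdRankLE n s X :=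
  fun k => (hX k).trans (hrs k)

theorem hosvdRankLE_zero : hosvdRankLE n r 0 := by
  intro k
  rw [show unfold n k (fun j => (0 : EuclideanSpace ℝ (∀ i, Fin (n i))) j) = 0 from rfl,
    Matrix.rank_zero]
  exact Nat.zero_le _

theorem hosvdRankLE.add (hX : hosvdRankLE n r X) (hY : hosvdRankLE n s Y) :
    hosvdRankLE n (r + s) (X + Y) := fun k =>
  (Matrix.rank_add_le (unfold n k (fun j => X j)) (unfold n k (fun j => Y j))).trans
    (add_le_add (hX k) (hY k))

theorem hosvdRankLE.smul (hX : hosvdRankLE n r X) (c : ℝ) : hosvdRankLE n r (c • X) :=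
  fun k => (Matrix.rank_smul_le c (unfold n k (fun j => X j))).trans (hX k)

theorem hosvdRankLE_sum {ι : Type*} (S : Finset ι) (f : ι → EuclideanSpace ℝ (∀ i, Fin (n i)))
    (hf : ∀ i ∈ S, hosvdRankLE n r (f i)) :
    hosvdRankLE n (S.card • r) (∑ i ∈ S, f i) := by
  classical
  induction S using Finset.induction_on with
  | empty => exact hosvdRankLE_zero
  | insert i S hi ih =>
    rw [Finset.sum_insert hi, Finset.card_insert_of_notMem hi, add_nsmul, one_nsmul, add_comm]
    exact (hf i (Finset.mem_insert_self i S)).add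
      (ih fun j hj => hf j (Finset.mem_insert_of_mem hj))

theorem hosvdRankLE_of_mem_span {S : Finset (EuclideanSpace ℝ (∀ i, Fin (n i)))}
    (hS : ∀ Z ∈ S, hosvdRankLE n r Z) (hX : X ∈ Submodule.span ℝ (S : Set _)) :
    hosvdRankLE n (S.card • r) X := by
  obtain ⟨c, -, rfl⟩ := Submodule.mem_span_finset.1 hX
  exact hosvdRankLE_sum S _ fun Z hZ => (hS Z hZ).smul (c Z)

end HosvdRank

theorem le_add_of_sq_le_mul_add_sq {x p q : ℝ} (hp : 0 ≤ p) (hq : 0 ≤ q)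
    (h : x ^ 2 ≤ p * x + q ^ 2) : x ≤ p + q := by
  nlinarith

theorem norm_le_of_norm_sub_le_one_add_mul {E : Type*} [NormedAddCommGroup E]
    [InnerProductSpace ℝ E] {w u : E} {ε p : ℝ} (hp : 0 ≤ p) (hwu : ⟪w, u⟫ ≤ p * ‖u‖)
    (h : ‖w - u‖ ≤ (1 + ε) * ‖w‖) : ‖u‖ ≤ 2 * p + √(2 * ε + ε ^ 2) * ‖w‖ := by
  refine le_add_of_sq_le_mul_add_sq (by positivity) (by positivity) ?_
  have hsq : ‖w - u‖ ^ 2 ≤ ((1 + ε) * ‖w‖) ^ 2 := pow_le_pow_left₀ (norm_nonneg _) h 2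
  rw [norm_sub_sq_real] at hsq
  rw [mul_pow, Real.sq_sqrt']
  nlinarith [le_max_left (2 * ε + ε ^ 2) 0, sq_nonneg ‖w‖]

section RestrictedIsometry

variable {E F : Type*} [NormedAddCommGroup E] [InnerProductSpace ℝ E]
  [NormedAddCommGroup F] [InnerProductSpace ℝ F]

def RestrictedIsometryOn (A : E →L[ℝ] F) (V : Submodule ℝ E) (δ : ℝ) : Prop :=
  ∀ z ∈ V, (1 - δ) * ‖z‖ ^ 2 ≤ ‖A z‖ ^ 2 ∧ ‖A z‖ ^ 2 ≤ (1 + δ) * ‖z‖ ^ 2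

variable {A : E →L[ℝ] F} {V : Submodule ℝ E} {δ μ : ℝ}

theorem RestrictedIsometryOn.norm_map_le (hRIP : RestrictedIsometryOn A V δ) {z : E}
    (hz : z ∈ V) : ‖A z‖ ≤ √(1 + δ) * ‖z‖ := by
  rw [← Real.sqrt_sq (norm_nonneg z), ← Real.sqrt_mul' _ (sq_nonneg _)]
  exact Real.le_sqrt_of_sq_le (hRIP z hz).2

theorem RestrictedIsometryOn.inner_sub_mul_inner_map_le (hRIP : RestrictedIsometryOn A V δ)
    (hδ0 : 0 ≤ δ) (hδ1 : δ < 1) (hμ1 : 1 / (1 + δ) ≤ μ) (hμ2 : μ ≤ 1 / (1 - δ))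
    {x y : E} (hadd : x + y ∈ V) (hsub : x - y ∈ V) :
    ⟪x, y⟫ - μ * ⟪A x, A y⟫ ≤ δ / (1 - δ) * (‖x‖ ^ 2 + ‖y‖ ^ 2) := by
  have h1δ : 0 < 1 - δ := by linarith
  rw [div_le_iff₀ (by linarith)] at hμ1
  rw [le_div_iff₀ h1δ] at hμ2
  have hμ0 : 0 ≤ μ := by nlinarith
  -- polarize both inner products; the lower RIP bound on `x + y` and the upper one on `x - y`
  -- each cost a factor `2δ / (1 - δ)`
  have hlow := (hRIP _ hadd).1
  have hup := (hRIP _ hsub).2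
  rw [map_add] at hlow
  rw [map_sub] at hup
  have hxy := norm_add_sq_real x y
  have hxy' := norm_sub_sq_real x y
  have hAxy := norm_add_sq_real (A x) (A y)
  have hAxy' := norm_sub_sq_real (A x) (A y)
  rw [div_mul_eq_mul_div, le_div_iff₀ h1δ]
  nlinarith [mul_le_mul_of_nonneg_left hlow hμ0, mul_le_mul_of_nonneg_left hup hμ0,
    mul_nonneg hδ0 (sq_nonneg ‖x + y‖), mul_nonneg hδ0 (sq_nonneg ‖x - y‖),
    mul_nonneg (sub_nonneg.2 hμ1) (sq_nonneg ‖x + y‖)]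

theorem RestrictedIsometryOn.inner_sub_mul_inner_map_le_mul_norm
    (hRIP : RestrictedIsometryOn A V δ)
    (hδ0 : 0 ≤ δ) (hδ1 : δ < 1) (hμ1 : 1 / (1 + δ) ≤ μ) (hμ2 : μ ≤ 1 / (1 - δ))
    {u v : E} (hu : u ∈ V) (hv : v ∈ V) :
    ⟪u, v⟫ - μ * ⟪A u, A v⟫ ≤ 2 * δ / (1 - δ) * ‖u‖ * ‖v‖ := by
  rcases eq_or_lt_of_le (mul_nonneg (norm_nonneg u) (norm_nonneg v)) with h0 | hpos
  · rcases mul_eq_zero.1 h0.symm with h | h <;> simp [norm_eq_zero.1 h]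
  -- rescaling to `‖v‖ • u` and `‖u‖ • v` balances the two squared norms
  have h := hRIP.inner_sub_mul_inner_map_le hδ0 hδ1 hμ1 hμ2 (x := ‖v‖ • u) (y := ‖u‖ • v)
    (V.add_mem (V.smul_mem _ hu) (V.smul_mem _ hv)) (V.sub_mem (V.smul_mem _ hu) (V.smul_mem _ hv))
  simp only [map_smul, real_inner_smul_left, real_inner_smul_right, norm_smul, Real.norm_eq_abs,
    abs_norm] at h
  refine le_of_mul_le_mul_left ?_ hpos
  linear_combination h

variable [CompleteSpace E] [CompleteSpace F]

theorem RestrictedIsometryOn.inner_gradient_step_le (hRIP : RestrictedIsometryOn A V δ)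
    (hδ0 : 0 ≤ δ) (hδ1 : δ < 1) (hμ1 : 1 / (1 + δ) ≤ μ) (hμ2 : μ ≤ 1 / (1 - δ))
    {u v : E} (hu : u ∈ V) (hv : v ∈ V) (e : F) :
    ⟪v + μ • (A†) (e - A v), u⟫ ≤ (2 * δ / (1 - δ) * ‖v‖ + √(1 + δ) / (1 - δ) * ‖e‖) * ‖u‖ := by
  have hμ0 : 0 ≤ μ := (div_nonneg zero_le_one (by linarith)).trans hμ1
  have hcross := hRIP.inner_sub_mul_inner_map_le_mul_norm hδ0 hδ1 hμ1 hμ2 hv hu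
  have hnoise : μ * ⟪e, A u⟫ ≤ 1 / (1 - δ) * (‖e‖ * (√(1 + δ) * ‖u‖)) := by
    have hAu : ⟪e, A u⟫ ≤ ‖e‖ * (√(1 + δ) * ‖u‖) := (real_inner_le_norm e (A u)).trans
      (mul_le_mul_of_nonneg_left (hRIP.norm_map_le hu) (norm_nonneg e))
    exact (mul_le_mul_of_nonneg_left hAu hμ0).trans
      (mul_le_mul_of_nonneg_right hμ2 (by positivity))
  rw [inner_add_left, real_inner_smul_left, ContinuousLinearMap.adjoint_inner_left,
    inner_sub_left]
  linear_combination hcross + hnoise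

theorem RestrictedIsometryOn.norm_gradient_step_le (hRIP : RestrictedIsometryOn A V δ)
    (hδ1 : δ < 1) (hμ0 : 0 ≤ μ) (hμ2 : μ ≤ 1 / (1 - δ)) {v : E} (hv : v ∈ V) (e : F) :
    ‖v + μ • (A†) (e - A v)‖ ≤ ((1 - δ + √(1 + δ) * ‖A‖) * ‖v‖ + ‖A‖ * ‖e‖) / (1 - δ) := by
  have h1δ : 0 < 1 - δ := by linarith
  have hstep : ‖(A†) (e - A v)‖ ≤ ‖A‖ * (‖e‖ + √(1 + δ) * ‖v‖) :=
    calc ‖(A†) (e - A v)‖ ≤ ‖A†‖ * ‖e - A v‖ := (A†).le_opNorm _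
      _ ≤ ‖A‖ * (‖e‖ + √(1 + δ) * ‖v‖) := by
        rw [ContinuousLinearMap.adjoint.norm_map]
        gcongr
        exact (norm_sub_le _ _).trans (add_le_add le_rfl (hRIP.norm_map_le hv))
  calc ‖v + μ • (A†) (e - A v)‖ ≤ ‖v‖ + μ * ‖(A†) (e - A v)‖ := by
        refine (norm_add_le _ _).trans ?_
        rw [norm_smul, Real.norm_of_nonneg hμ0]
    _ ≤ ‖v‖ + 1 / (1 - δ) * (‖A‖ * (‖e‖ + √(1 + δ) * ‖v‖)) := by gcongr
    _ = ((1 - δ + √(1 + δ) * ‖A‖) * ‖v‖ + ‖A‖ * ‖e‖) / (1 - δ) := by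
        field_simp
        ring

theorem RestrictedIsometryOn.norm_le_of_norm_gradient_step_sub_le
    (hRIP : RestrictedIsometryOn A V δ)
    (hδ0 : 0 ≤ δ) (hδ1 : δ < 1) (hμ1 : 1 / (1 + δ) ≤ μ) (hμ2 : μ ≤ 1 / (1 - δ))
    {u v : E} (hu : u ∈ V) (hv : v ∈ V) (e : F) {ε : ℝ}
    (hthr : ‖v + μ • (A†) (e - A v) - u‖ ≤ (1 + ε) * ‖v + μ • (A†) (e - A v)‖) :
    ‖u‖ ≤ (4 * δ / (1 - δ) + √(2 * ε + ε ^ 2) * (1 - δ + √(1 + δ) * ‖A‖) / (1 - δ)) * ‖v‖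
      + (2 * √(1 + δ) / (1 - δ) + √(2 * ε + ε ^ 2) * ‖A‖ / (1 - δ)) * ‖e‖ := by
  have hμ0 : 0 ≤ μ := (div_nonneg zero_le_one (by linarith)).trans hμ1
  have hδ' : 0 ≤ 2 * δ / (1 - δ) := div_nonneg (by linarith) (by linarith)
  have hu_le := norm_le_of_norm_sub_le_one_add_mul (by positivity)
    (hRIP.inner_gradient_step_le hδ0 hδ1 hμ1 hμ2 hu hv e) hthr
  have hstep := hRIP.norm_gradient_step_le hδ1 hμ0 hμ2 hv e
  calc ‖u‖ ≤ 2 * (2 * δ / (1 - δ) * ‖v‖ + √(1 + δ) / (1 - δ) * ‖e‖)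
        + √(2 * ε + ε ^ 2) * (((1 - δ + √(1 + δ) * ‖A‖) * ‖v‖ + ‖A‖ * ‖e‖) / (1 - δ)) :=
        hu_le.trans (by gcongr)
    _ = _ := by ring

end RestrictedIsometry

theorem tiht_contraction_factor_le {a δ κ ε : ℝ} (ha : a ∈ Set.Ioo (0 : ℝ) 1)
    (hδa : δ ≤ a / (a + 8)) (hκ : 0 ≤ κ)
    (hε : ε = a ^ 2 * (1 - δ) ^ 2 / (17 * (1 - δ + √(1 + δ) * κ) ^ 2)) :
    4 * δ / (1 - δ) + √(2 * ε + ε ^ 2) * (1 - δ + √(1 + δ) * κ) / (1 - δ) ≤ a := by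
  obtain ⟨ha0, ha1⟩ := ha
  rw [le_div_iff₀ (by linarith)] at hδa
  have h1δ : 0 < 1 - δ := by nlinarith
  set K := 1 - δ + √(1 + δ) * κ
  have hK : 1 - δ ≤ K := le_add_of_nonneg_right (by positivity)
  have hK0 : 0 < K := h1δ.trans_le hK
  have hε0 : 0 ≤ ε := by rw [hε]; positivity
  have hε17 : ε ≤ 1 / 17 := by
    rw [hε, div_le_div_iff₀ (by positivity) (by norm_num)]
    nlinarith [mul_le_mul ha1.le hK h1δ.le zero_le_one, mul_pos ha0 h1δ]
  -- `ε` is chosen so that `(17 / 4) ε = (a (1 - δ) / (2 K)) ^ 2`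
  have hsqrt : √(2 * ε + ε ^ 2) ≤ a * (1 - δ) / (2 * K) := by
    rw [Real.sqrt_le_left (by positivity)]
    have h17 : (a * (1 - δ) / (2 * K)) ^ 2 = 17 / 4 * ε := by
      rw [hε]
      field_simp
      ring
    nlinarith
  have hfirst : 4 * δ / (1 - δ) ≤ a / 2 := by
    rw [div_le_iff₀ h1δ]
    nlinarith
  have hsecond : √(2 * ε + ε ^ 2) * K / (1 - δ) ≤ a / 2 :=
    calc √(2 * ε + ε ^ 2) * K / (1 - δ) ≤ a * (1 - δ) / (2 * K) * K / (1 - δ) := by gcongr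
      _ = a / 2 := by field_simp
  linarith

theorem normalized_TIHT_one_step_general
    (d m : ℕ) (n r : Fin d → ℕ)
    (a : ℝ) (ha : a ∈ Set.Ioo (0 : ℝ) 1)
    (A : EuclideanSpace ℝ (∀ i, Fin (n i)) →L[ℝ] EuclideanSpace ℝ (Fin m))
    (δ : ℝ) (hδ0 : 0 ≤ δ) (hδa : δ ≤ a / (a + 8))
    (hTRIP : ∀ Z : EuclideanSpace ℝ (∀ i, Fin (n i)),
      hosvdRankLE n (fun k => 3 * r k) Z →
        (1 - δ) * ‖Z‖ ^ 2 ≤ ‖A Z‖ ^ 2 ∧ ‖A Z‖ ^ 2 ≤ (1 + δ) * ‖Z‖ ^ 2)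
    (ε b : ℝ)
    (hε : ε = a ^ 2 * (1 - δ) ^ 2 / (17 * (1 - δ + Real.sqrt (1 + δ) * ‖A‖) ^ 2))
    (hb : b = 2 * Real.sqrt (1 + δ) / (1 - δ)
      + Real.sqrt (4 * ε + 2 * ε ^ 2) * ‖A‖ / (1 - δ))
    (X X' : EuclideanSpace ℝ (∀ i, Fin (n i)))
    (hX : hosvdRankLE n r X) (hX' : hosvdRankLE n r X')
    (e : EuclideanSpace ℝ (Fin m))
    (μ : ℝ) (hμ1 : 1 / (1 + δ) ≤ μ) (hμ2 : μ ≤ 1 / (1 - δ))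
    (Y : EuclideanSpace ℝ (∀ i, Fin (n i)))
    (hY : Y = X' + μ • (ContinuousLinearMap.adjoint A) (A X + e - A X'))
    (X'' : EuclideanSpace ℝ (∀ i, Fin (n i))) (hX'' : hosvdRankLE n r X'')
    (hthr : ‖Y - X''‖ ≤ (1 + ε) * ‖Y - X‖) :
    ‖X'' - X‖ ≤ a * ‖X' - X‖ + b * ‖e‖ := by
  classical
  have hδ1 : δ < 1 := hδa.trans_lt ((div_lt_one (by linarith [ha.1])).2 (by linarith))
  set S : Finset (EuclideanSpace ℝ (∀ i, Fin (n i))) := {X, X', X''}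
  set V := Submodule.span ℝ (S : Set (EuclideanSpace ℝ (∀ i, Fin (n i))))
  have hrank : ∀ Z ∈ S, hosvdRankLE n r Z := by
    simp only [S, Finset.mem_insert, Finset.mem_singleton]
    rintro _ (rfl | rfl | rfl) <;> assumption
  have hRIP : RestrictedIsometryOn A V δ := fun Z hZ => hTRIP Z
    ((hosvdRankLE_of_mem_span hrank hZ).mono fun k => Nat.mul_le_mul_right _ Finset.card_le_three)
  have hmem : ∀ Z ∈ S, Z ∈ V := fun _ hZ => Submodule.subset_span hZ
  have hgrad : Y - X = (X' - X) + μ • (ContinuousLinearMap.adjoint A) (e - A (X' - X)) := by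
    rw [hY, show A X + e - A X' = e - A (X' - X) by rw [map_sub]; abel]
    abel
  rw [show Y - X'' = (Y - X) - (X'' - X) by abel, hgrad] at hthr
  have hε0 : 0 ≤ ε := by rw [hε]; positivity
  have hsqrt : √(2 * ε + ε ^ 2) ≤ √(4 * ε + 2 * ε ^ 2) :=
    Real.sqrt_le_sqrt (by nlinarith)
  calc ‖X'' - X‖ ≤ _ := hRIP.norm_le_of_norm_gradient_step_sub_le hδ0 hδ1 hμ1 hμ2
        (V.sub_mem (hmem _ (by simp [S])) (hmem _ (by simp [S])))
        (V.sub_mem (hmem _ (by simp [S])) (hmem _ (by simp [S]))) e hthr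
    _ ≤ a * ‖X' - X‖ + b * ‖e‖ := by
      rw [hb]
      gcongr
      exact tiht_contraction_factor_le ha hδa (norm_nonneg A) hε

theorem normalized_TIHT_one_step
    (d m : ℕ) (hd : 2 ≤ d) (hm : 0 < m) (n r : Fin d → ℕ)
    (hn : ∀ i, 0 < n i) (hr : ∀ i, 0 < r i)
    (a : ℝ) (ha : a ∈ Set.Ioo (0 : ℝ) 1)
    (A : EuclideanSpace ℝ (∀ i, Fin (n i)) →L[ℝ] EuclideanSpace ℝ (Fin m))
    (δ : ℝ) (hδ0 : 0 ≤ δ) (hδa : δ ≤ a / (a + 8))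
    (hTRIP : ∀ Z : EuclideanSpace ℝ (∀ i, Fin (n i)),
      hosvdRankLE n (fun k => 3 * r k) Z →
        (1 - δ) * ‖Z‖ ^ 2 ≤ ‖A Z‖ ^ 2 ∧ ‖A Z‖ ^ 2 ≤ (1 + δ) * ‖Z‖ ^ 2)
    (ε b : ℝ)
    (hε : ε = a ^ 2 * (1 - δ) ^ 2 / (17 * (1 - δ + Real.sqrt (1 + δ) * ‖A‖) ^ 2))
    (hb : b = 2 * Real.sqrt (1 + δ) / (1 - δ)
      + Real.sqrt (4 * ε + 2 * ε ^ 2) * ‖A‖ / (1 - δ))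
    (X X' : EuclideanSpace ℝ (∀ i, Fin (n i)))
    (hX : hosvdRankLE n r X) (hX' : hosvdRankLE n r X')
    (e : EuclideanSpace ℝ (Fin m))
    (μ : ℝ) (hμ1 : 1 / (1 + δ) ≤ μ) (hμ2 : μ ≤ 1 / (1 - δ))
    (Y : EuclideanSpace ℝ (∀ i, Fin (n i)))
    (hY : Y = X' + μ • (ContinuousLinearMap.adjoint A) (A X + e - A X'))
    (X'' : EuclideanSpace ℝ (∀ i, Fin (n i))) (hX'' : hosvdRankLE n r X'')
    (hthr : ‖Y - X''‖ ≤ (1 + ε) * ‖Y - X‖) :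
    ‖X'' - X‖ ≤ a * ‖X' - X‖ + b * ‖e‖ :=
  normalized_TIHT_one_step_general d m n r a ha A δ hδ0 hδa hTRIP ε b hε hb X X' hX hX' e μ hμ1 hμ2
    Y hY X'' hX'' hthr
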